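/- arXiv:1706.02492 — 2 statements merged into one kernel-verified Lean document; each statement's English description precedes it below -/
import Mathlib

section
/- Let (ε_t)_{t∈ℤ} be i.i.d. with mean zero and finite fourth moment, and let Y_t = Σ_{s=0}^∞ ψ_s ε_{t−s} be a linear process with Σ_{s=0}^∞ |ψ_s| < ∞. Then the normalized centered partial sums of lagged products are uniformly bounded in L²: sup over all n ≥ 1 and all integers k, l ≥ 1 of E| n^{−1/2} Σ_{t=1}^n ( Y_{t−k} Y_{t−l} − E[Y_{t−k} Y_{t−l}] ) |² is finite. -/
open MeasureTheory Filter ProbabilityTheory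

noncomputable section

variable {Ω : Type*} [MeasurableSpace Ω]

/-- `arX Y t a ω = Σ_{k=1}^∞ a_k Y_{t-k}(ω)`; the index `k : ℕ` represents lag `k+1`. -/
def arX (Y : ℤ → Ω → ℝ) (t : ℤ) (a : ℕ → ℝ) (ω : Ω) : ℝ :=
  ∑' k : ℕ, a k * Y (t - 1 - (k : ℤ)) ω

/-- squared RKHS norm `Σ_k λ_k² b_k²`. -/
def eNormSq (L : ℕ → ℝ) (b : ℕ → ℝ) : ℝ := ∑' k : ℕ, (L k * b k) ^ 2

/-- RKHS norm `|b|_E`. -/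
def eNorm (L : ℕ → ℝ) (b : ℕ → ℝ) : ℝ := Real.sqrt (eNormSq L b)

/-- ℓ² norm `|b|₂`. -/
def l2Norm (b : ℕ → ℝ) : ℝ := Real.sqrt (∑' k : ℕ, (b k) ^ 2)

/-- membership in the ellipsoid `E_K(B)` (index `k : ℕ` is lag `k+1`, so `b_j = 0` for
`j > K` reads `b k = 0` for `k ≥ K`). -/
def memEKB (L : ℕ → ℝ) (K : ℕ) (B : ℝ) (b : ℕ → ℝ) : Prop :=
  Summable (fun k => (L k * b k) ^ 2) ∧ eNormSq L b ≤ B ^ 2 ∧ ∀ k, K ≤ k → b k = 0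

/-- membership in `E_K = ∪_B E_K(B)`. -/
def memEK (L : ℕ → ℝ) (K : ℕ) (b : ℕ → ℝ) : Prop :=
  Summable (fun k => (L k * b k) ^ 2) ∧ ∀ k, K ≤ k → b k = 0

/-- membership in `E(B)`. -/
def memEB (L : ℕ → ℝ) (B : ℝ) (b : ℕ → ℝ) : Prop :=
  Summable (fun k => (L k * b k) ^ 2) ∧ eNormSq L b ≤ B ^ 2

/-- membership in `E`. -/
def memE (L : ℕ → ℝ) (b : ℕ → ℝ) : Prop := Summable fun k => (L k * b k) ^ 2

/-- empirical least-squares loss `(1/n) Σ_{t=1}^n (Y_t − X_t(b))²`. -/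
def empLoss (Y : ℤ → Ω → ℝ) (n : ℕ) (b : ℕ → ℝ) (ω : Ω) : ℝ :=
  (1 / (n : ℝ)) * ∑ t ∈ Finset.range n, (Y (t + 1) ω - arX Y (t + 1) b ω) ^ 2

/-- penalized empirical loss. -/
def penLoss (Y : ℤ → Ω → ℝ) (L : ℕ → ℝ) (n : ℕ) (τ : ℝ) (b : ℕ → ℝ) (ω : Ω) : ℝ :=
  empLoss Y n b ω + τ * eNormSq L b

/-- population loss `E (Y₁ − X₁(b))²`. -/
def popLoss (μ : Measure Ω) (Y : ℤ → Ω → ℝ) (b : ℕ → ℝ) : ℝ :=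
  ∫ ω, (Y 1 ω - arX Y 1 b ω) ^ 2 ∂μ

/-- population penalized loss `E X₁(b−φ)² + τ |b|_E²`. -/
def popPenLoss (μ : Measure Ω) (Y : ℤ → Ω → ℝ) (L : ℕ → ℝ) (φ : ℕ → ℝ) (τ : ℝ)
    (b : ℕ → ℝ) : ℝ :=
  (∫ ω, (arX Y 1 (fun k => b k - φ k) ω) ^ 2 ∂μ) + τ * eNormSq L b

/-- `Z_n = O_p(a_n)`. -/
def IsBigOp (μ : Measure Ω) (Z : ℕ → Ω → ℝ) (a : ℕ → ℝ) : Prop :=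
  ∀ η : ℝ, 0 < η → ∃ M : ℝ, 0 < M ∧
    ∀ᶠ n in atTop, μ {ω | M * |a n| < |Z n ω|} ≤ ENNReal.ofReal η

/-- convergence to `0` in probability. -/
def TendstoInProb (μ : Measure Ω) (Z : ℕ → Ω → ℝ) : Prop :=
  ∀ η : ℝ, 0 < η → Tendsto (fun n => μ {ω | η < |Z n ω|}) atTop (nhds 0)

/-- Condition 1 of the paper. `φ k`, `L k` denote `φ_{k+1}`, `λ_{k+1}` (1-indexed). -/
structure Condition1 (μ : Measure Ω) (Y : ℤ → Ω → ℝ) (φ : ℕ → ℝ) (ε : ℤ → Ω → ℝ)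
    (L : ℕ → ℝ) (lam : ℝ) : Prop where
  lam_gt : 1 / 2 < lam
  L_pos : ∀ k, 0 < L k
  L_asymp : ∃ c₁ c₂ : ℝ, 0 < c₁ ∧ c₁ ≤ c₂ ∧ ∀ k : ℕ,
      c₁ * ((k : ℝ) + 1) ^ lam ≤ L k ∧ L k ≤ c₂ * ((k : ℝ) + 1) ^ lam
  meas_Y : ∀ t, Measurable (Y t)
  meas_eps : ∀ t, Measurable (ε t)
  phi_mem : memE L φ
  ar_eq : ∀ t : ℤ, ∀ᵐ ω ∂μ, Y t ω = arX Y t φ ω + ε t ω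
  no_roots : ∀ z : ℂ, ‖z‖ ≤ 1 → (1 : ℂ) - ∑' k : ℕ, (φ k : ℂ) * z ^ (k + 1) ≠ 0
  indep : iIndepFun ε μ
  ident : ∀ s t : ℤ, IdentDistrib (ε s) (ε t) μ μ
  mean_zero : ∀ t, ∫ ω, ε t ω ∂μ = 0
  fourth_moment : ∀ t, Integrable (fun ω => (ε t ω) ^ 4) μ
  sq_integrable : ∀ t, Integrable (fun ω => (Y t ω) ^ 2) μ
  stationary : ∀ (s : ℤ) (m : ℕ) (t : Fin m → ℤ),
      Measure.map (fun ω i => Y (t i + s) ω) μ = Measure.map (fun ω i => Y (t i) ω) μ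

/-! Expanding both factors, `Y_{t-k} Y_{t-l} - E[Y_{t-k} Y_{t-l}]` is almost surely the absolutely
convergent double series `Σ_{i,j} ψ_i ψ_j (ε_{t-k-i} ε_{t-l-j} - E[ε_{t-k-i} ε_{t-l-j}])`.
For fixed `(i, j)` the products `ε_{t+a} ε_{t+b}`, `t = 1, …, n`, are pairwise uncorrelated
(for `a = b` they are independent, otherwise some factor of the mixed moment occurs only once)
and have second moment at most `E ε⁴`, so their centred sum has `L²` norm at most `√(n E ε⁴)`.
Minkowski's inequality for the double series bounds the `L²` norm of the centred sum of the
`Y_{t-k} Y_{t-l}` by `(Σ |ψ_s|)² √(n E ε⁴)`, so the constant `(Σ |ψ_s|)⁴ E ε⁴` works. -/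

open scoped ENNReal

namespace MeasureTheory

variable {μ : Measure Ω}

theorem eLpNorm_le_tsum_eLpNorm_of_ae_hasSum {E ι : Type*} [NormedAddCommGroup E]
    [CompleteSpace E] [Countable ι] {p : ℝ≥0∞} [Fact (1 ≤ p)] {f : ι → Ω → E} {S : Ω → E}
    (hf : ∀ i, AEStronglyMeasurable (f i) μ) (hS : ∀ᵐ ω ∂μ, HasSum (fun i => f i ω) (S ω)) :
    eLpNorm S p μ ≤ ∑' i, eLpNorm (f i) p μ := by
  by_cases htop : ∑' i, eLpNorm (f i) p μ = ∞
  · simp [htop]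
  have hmem (i : ι) : MemLp (f i) p μ :=
    ⟨hf i, (ENNReal.le_tsum i).trans_lt (lt_top_iff_ne_top.2 htop)⟩
  set F : ι → Lp E p μ := fun i => (hmem i).toLp (f i)
  have hF : ∑' i, ‖F i‖ₑ = ∑' i, eLpNorm (f i) p μ := by
    simp only [F, Lp.enorm_toLp]
  have hFf : ∀ᵐ ω ∂μ, ∀ i, F i ω = f i ω := ae_all_iff.2 fun i => (hmem i).coeFn_toLp
  have hSF : S =ᵐ[μ] ⇑(∑' i, F i) := by
    filter_upwards [hS, Lp.hasSum_coeFn_tsum (hF ▸ htop), hFf] with ω hSω hFω hFfω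
    simp only [hFfω] at hFω
    exact hSω.unique hFω
  calc eLpNorm S p μ = ‖∑' i, F i‖ₑ := by rw [eLpNorm_congr_ae hSF, Lp.enorm_def]
    _ ≤ ∑' i, ‖F i‖ₑ := enorm_tsum_le_tsum_enorm
    _ = ∑' i, eLpNorm (f i) p μ := hF

theorem eLpNorm_two_sq_eq_lintegral {E : Type*} [NormedAddCommGroup E] (f : Ω → E) :
    eLpNorm f 2 μ ^ 2 = ∫⁻ ω, ‖f ω‖ₑ ^ 2 ∂μ := by
  simpa only [NNReal.coe_ofNat, ENNReal.rpow_two, ENNReal.coe_ofNat] using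
    eLpNorm_nnreal_pow_eq_lintegral (f := f) (μ := μ) (p := 2) two_ne_zero

theorem integral_sq_eq_toReal_eLpNorm_two_sq {f : Ω → ℝ} (hf : AEStronglyMeasurable f μ) :
    ∫ ω, f ω ^ 2 ∂μ = (eLpNorm f 2 μ).toReal ^ 2 := by
  rw [integral_eq_lintegral_of_nonneg_ae (.of_forall fun ω => sq_nonneg _) (hf.pow 2),
    ← ENNReal.toReal_pow, eLpNorm_two_sq_eq_lintegral]
  simp only [← Real.enorm_of_nonneg (sq_nonneg _), enorm_pow]

theorem memLp_four_of_integrable_pow_four {f : Ω → ℝ} (hf : AEStronglyMeasurable f μ)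
    (h4 : Integrable (fun ω => f ω ^ 4) μ) : MemLp f 4 μ := by
  refine (integrable_norm_rpow_iff hf (by norm_num) (by norm_num)).1 ?_
  refine h4.congr (.of_forall fun ω => ?_)
  simp only [Real.norm_eq_abs, ENNReal.toReal_ofNat]
  rw [show (4 : ℝ) = (4 : ℕ) by norm_num, Real.rpow_natCast, pow_abs, abs_of_nonneg (by positivity)]

theorem integrable_of_integrable_pow_four [IsFiniteMeasure μ] {f : Ω → ℝ}
    (hf : AEStronglyMeasurable f μ) (h4 : Integrable (fun ω => f ω ^ 4) μ) : Integrable f μ :=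
  (memLp_four_of_integrable_pow_four hf h4).integrable (by norm_num)

end MeasureTheory

namespace ProbabilityTheory

section LagProduct

variable {μ : Measure Ω} {ε : ℤ → Ω → ℝ}

theorem integral_mul_eq_zero_of_iIndepFun (hmeas : ∀ t, Measurable (ε t))
    (hindep : iIndepFun ε μ) (hmean : ∀ t, ∫ ω, ε t ω ∂μ = 0) {x y : ℤ} (hxy : x ≠ y) :
    ∫ ω, ε x ω * ε y ω ∂μ = 0 := by
  rw [(hindep.indepFun hxy).integral_fun_mul_eq_mul_integral (hmeas x).aestronglyMeasurable
    (hmeas y).aestronglyMeasurable, hmean, zero_mul]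

theorem integral_mul_mul_mul_eq_zero_of_iIndepFun (hmeas : ∀ t, Measurable (ε t))
    (hindep : iIndepFun ε μ) (hmean : ∀ t, ∫ ω, ε t ω ∂μ = 0) {w x y z : ℤ}
    (hw : w ∉ ({x, y, z} : Finset ℤ)) :
    ∫ ω, ε w ω * (ε x ω * ε y ω * ε z ω) ∂μ = 0 := by
  classical
  have hindep' := hindep.indepFun_finset {w} {x, y, z} (Finset.disjoint_singleton_left.2 hw) hmeas
  have hw' : Measurable fun p : ({w} : Finset ℤ) → ℝ => p ⟨w, Finset.mem_singleton_self w⟩ := by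
    fun_prop
  have hxyz : Measurable fun p : ({x, y, z} : Finset ℤ) → ℝ =>
      p ⟨x, by simp⟩ * p ⟨y, by simp⟩ * p ⟨z, by simp⟩ := by
    fun_prop
  have hprod : IndepFun (ε w) (fun ω => ε x ω * ε y ω * ε z ω) μ := hindep'.comp hw' hxyz
  rw [hprod.integral_fun_mul_eq_mul_integral (hmeas w).aestronglyMeasurable
    (by fun_prop), hmean, zero_mul]

/-- One of `x`, `y` occurs exactly once among `x, y, u, v`, so its factor is independent of the
others and has mean zero. -/
theorem integral_mul_mul_eq_zero_of_iIndepFun (hmeas : ∀ t, Measurable (ε t))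
    (hindep : iIndepFun ε μ) (hmean : ∀ t, ∫ ω, ε t ω ∂μ = 0) {x y u v : ℤ} (hxy : x ≠ y)
    (hxu : ¬(x = u ∧ y = v)) (hxv : ¬(x = v ∧ y = u)) :
    ∫ ω, ε x ω * ε y ω * (ε u ω * ε v ω) ∂μ = 0 := by
  by_cases hx : x ∈ ({y, u, v} : Finset ℤ)
  · have hy : y ∉ ({x, u, v} : Finset ℤ) := by
      simp only [Finset.mem_insert, Finset.mem_singleton] at hx ⊢
      grind
    rw [← integral_mul_mul_mul_eq_zero_of_iIndepFun hmeas hindep hmean hy]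
    congr 1 with ω
    ring
  · rw [← integral_mul_mul_mul_eq_zero_of_iIndepFun hmeas hindep hmean hx]
    congr 1 with ω
    ring

theorem memLp_mul_of_integrable_pow_four (hmeas : ∀ t, Measurable (ε t))
    (hfourth : ∀ t, Integrable (fun ω => ε t ω ^ 4) μ) (x y : ℤ) :
    MemLp (fun ω => ε x ω * ε y ω) 2 μ := by
  have h4 (t : ℤ) : MemLp (ε t) 4 μ :=
    memLp_four_of_integrable_pow_four (hmeas t).aestronglyMeasurable (hfourth t)
  have : ENNReal.HolderTriple 4 4 2 := ⟨by
    rw [show (4 : ℝ≥0∞) = 2 * 2 by norm_num, ENNReal.mul_inv (by simp) (by simp), ← two_mul,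
      ← mul_assoc, ENNReal.mul_inv_cancel (by simp) (by simp), one_mul]⟩
  exact (h4 y).mul (h4 x)

theorem integral_mul_sq_le_integral_pow_four (hmeas : ∀ t, Measurable (ε t))
    (hident : ∀ s t : ℤ, IdentDistrib (ε s) (ε t) μ μ)
    (hfourth : ∀ t, Integrable (fun ω => ε t ω ^ 4) μ) (x y : ℤ) :
    ∫ ω, (ε x ω * ε y ω) ^ 2 ∂μ ≤ ∫ ω, ε 0 ω ^ 4 ∂μ := by
  have hmoment (t : ℤ) : ∫ ω, ε t ω ^ 4 ∂μ = ∫ ω, ε 0 ω ^ 4 ∂μ :=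
    ((hident t 0).pow (n := 4)).integral_eq
  calc ∫ ω, (ε x ω * ε y ω) ^ 2 ∂μ ≤ ∫ ω, (ε x ω ^ 4 + ε y ω ^ 4) / 2 ∂μ := by
        refine integral_mono ((memLp_two_iff_integrable_sq (by fun_prop)).1
          (memLp_mul_of_integrable_pow_four hmeas hfourth x y))
          (((hfourth x).add (hfourth y)).div_const 2) fun ω => ?_
        nlinarith [sq_nonneg (ε x ω ^ 2 - ε y ω ^ 2)]
    _ = ∫ ω, ε 0 ω ^ 4 ∂μ := by
        rw [integral_div, integral_add (hfourth x) (hfourth y), hmoment x, hmoment y]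
        ring

theorem eLpNorm_sub_integral_two_sq (X : Ω → ℝ) :
    eLpNorm (fun ω => X ω - μ[X]) 2 μ ^ 2 = evariance X μ :=
  eLpNorm_two_sq_eq_lintegral _

variable [IsProbabilityMeasure μ]

theorem integral_abs_mul_le_one_add_integral_pow_four (hmeas : ∀ t, Measurable (ε t))
    (hident : ∀ s t : ℤ, IdentDistrib (ε s) (ε t) μ μ)
    (hfourth : ∀ t, Integrable (fun ω => ε t ω ^ 4) μ) (x y : ℤ) :
    ∫ ω, |ε x ω * ε y ω| ∂μ ≤ 1 + ∫ ω, ε 0 ω ^ 4 ∂μ := by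
  have hxy := memLp_mul_of_integrable_pow_four hmeas hfourth x y
  have hsq := (memLp_two_iff_integrable_sq hxy.1).1 hxy
  calc ∫ ω, |ε x ω * ε y ω| ∂μ ≤ ∫ ω, 1 + (ε x ω * ε y ω) ^ 2 ∂μ :=
        integral_mono (hxy.integrable one_le_two).abs ((integrable_const 1).add hsq) fun ω => by
          nlinarith [sq_nonneg (|ε x ω * ε y ω| - 1), sq_abs (ε x ω * ε y ω)]
    _ ≤ 1 + ∫ ω, ε 0 ω ^ 4 ∂μ := by
        rw [integral_add (integrable_const 1) hsq, integral_const, probReal_univ, one_smul]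
        exact add_le_add_right (integral_mul_sq_le_integral_pow_four hmeas hident hfourth x y) 1

theorem covariance_lagProduct_eq_zero (hmeas : ∀ t, Measurable (ε t))
    (hindep : iIndepFun ε μ) (hmean : ∀ t, ∫ ω, ε t ω ∂μ = 0)
    (hfourth : ∀ t, Integrable (fun ω => ε t ω ^ 4) μ) {a b t s : ℤ} (hts : t ≠ s) :
    cov[fun ω => ε (t + a) ω * ε (t + b) ω, fun ω => ε (s + a) ω * ε (s + b) ω; μ] = 0 := by
  have hX := memLp_mul_of_integrable_pow_four hmeas hfourth (t + a) (t + b)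
  have hY := memLp_mul_of_integrable_pow_four hmeas hfourth (s + a) (s + b)
  rcases eq_or_ne a b with rfl | hab
  · have hsq : Measurable fun x : ℝ => x * x := by fun_prop
    exact ((hindep.indepFun (by omega : t + a ≠ s + a)).comp hsq hsq).covariance_eq_zero hX hY
  · rw [covariance_eq_sub hX hY]
    simp only [Pi.mul_apply]
    rw [integral_mul_eq_zero_of_iIndepFun hmeas hindep hmean (by omega : t + a ≠ t + b), zero_mul,
      sub_zero]
    exact integral_mul_mul_eq_zero_of_iIndepFun hmeas hindep hmean (by omega) (by omega)
      (by omega)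

theorem variance_sum_lagProduct_le (hmeas : ∀ t, Measurable (ε t)) (hindep : iIndepFun ε μ)
    (hident : ∀ s t : ℤ, IdentDistrib (ε s) (ε t) μ μ) (hmean : ∀ t, ∫ ω, ε t ω ∂μ = 0)
    (hfourth : ∀ t, Integrable (fun ω => ε t ω ^ 4) μ) (n : ℕ) (a b : ℤ) :
    Var[fun ω => ∑ t ∈ Finset.range n, ε (t + a) ω * ε (t + b) ω; μ]
      ≤ n * ∫ ω, ε 0 ω ^ 4 ∂μ := by
  have hX (t : ℕ) := memLp_mul_of_integrable_pow_four hmeas hfourth (t + a) (t + b)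
  rw [variance_fun_sum' fun t _ => hX t]
  calc ∑ t ∈ Finset.range n, ∑ s ∈ Finset.range n,
        cov[fun ω => ε (t + a) ω * ε (t + b) ω, fun ω => ε (s + a) ω * ε (s + b) ω; μ]
      = ∑ t ∈ Finset.range n, Var[fun ω => ε (t + a) ω * ε (t + b) ω; μ] := by
        refine Finset.sum_congr rfl fun t ht => ?_
        rw [Finset.sum_eq_single_of_mem t ht fun s _ hst =>
          covariance_lagProduct_eq_zero hmeas hindep hmean hfourth (by exact_mod_cast hst.symm),
          covariance_self (by fun_prop)]
    _ ≤ ∑ _t ∈ Finset.range n, ∫ ω, ε 0 ω ^ 4 ∂μ := by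
        refine Finset.sum_le_sum fun t _ => (variance_le_expectation_sq (by fun_prop)).trans ?_
        exact integral_mul_sq_le_integral_pow_four hmeas hident hfourth _ _
    _ = n * ∫ ω, ε 0 ω ^ 4 ∂μ := by simp

theorem eLpNorm_sum_sub_integral_lagProduct_le (hmeas : ∀ t, Measurable (ε t))
    (hindep : iIndepFun ε μ) (hident : ∀ s t : ℤ, IdentDistrib (ε s) (ε t) μ μ)
    (hmean : ∀ t, ∫ ω, ε t ω ∂μ = 0) (hfourth : ∀ t, Integrable (fun ω => ε t ω ^ 4) μ)
    (n : ℕ) (a b : ℤ) :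
    eLpNorm (fun ω => ∑ t ∈ Finset.range n,
        (ε (t + a) ω * ε (t + b) ω - ∫ ω', ε (t + a) ω' * ε (t + b) ω' ∂μ)) 2 μ
      ≤ ENNReal.ofReal √(n * ∫ ω, ε 0 ω ^ 4 ∂μ) := by
  have hX (t : ℕ) := memLp_mul_of_integrable_pow_four hmeas hfourth (t + a) (t + b)
  set X : Ω → ℝ := fun ω => ∑ t ∈ Finset.range n, ε (t + a) ω * ε (t + b) ω
  have hcentered : (fun ω => ∑ t ∈ Finset.range n,
      (ε (t + a) ω * ε (t + b) ω - ∫ ω', ε (t + a) ω' * ε (t + b) ω' ∂μ))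
      = fun ω => X ω - μ[X] := by
    ext ω
    rw [Finset.sum_sub_distrib, integral_finsetSum _ fun t _ => (hX t).integrable one_le_two]
  rw [hcentered, ← ENNReal.pow_le_pow_left_iff two_ne_zero, eLpNorm_sub_integral_two_sq,
    ← ENNReal.ofReal_pow (Real.sqrt_nonneg _), Real.sq_sqrt (by positivity),
    ← ofReal_variance (memLp_finsetSum _ fun t _ => hX t)]
  exact ENNReal.ofReal_le_ofReal
    (variance_sum_lagProduct_le hmeas hindep hident hmean hfourth n a b)

end LagProduct

section LinearProcess

omit [MeasurableSpace Ω] in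
def linearProcess (ψ : ℕ → ℝ) (ε : ℤ → Ω → ℝ) (t : ℤ) (ω : Ω) : ℝ :=
  ∑' s : ℕ, ψ s * ε (t - s) ω

variable {μ : Measure Ω} {ε : ℤ → Ω → ℝ} {ψ : ℕ → ℝ}

theorem measurable_linearProcess (hmeas : ∀ t, Measurable (ε t)) (t : ℤ) :
    Measurable (linearProcess ψ ε t) :=
  Measurable.tsum fun _ => (hmeas _).const_mul _

theorem ae_summable_norm_linearProcess (hmeas : ∀ t, Measurable (ε t))
    (hident : ∀ s t : ℤ, IdentDistrib (ε s) (ε t) μ μ) (hint : Integrable (ε 0) μ)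
    (hψ : Summable fun s => |ψ s|) :
    ∀ᵐ ω ∂μ, ∀ t : ℤ, Summable fun s : ℕ => ‖ψ s * ε (t - s) ω‖ := by
  refine ae_all_iff.2 fun t => summable_norm_of_tsum_eLpNorm_ne_top le_rfl
    (fun s => ((hmeas _).const_mul _).aestronglyMeasurable) ?_
  have hterm (s : ℕ) :
      eLpNorm (fun ω => ψ s * ε (t - s) ω) 1 μ = ‖ψ s‖ₑ * eLpNorm (ε 0) 1 μ := by
    rw [← (hident (t - s) 0).eLpNorm_eq]
    exact eLpNorm_const_smul (ψ s) (ε (t - s)) 1 μ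
  simp only [hterm, ENNReal.tsum_mul_right]
  refine ENNReal.mul_ne_top (tsum_enorm_ne_top_iff_summable_norm.2 ?_)
    (memLp_one_iff_integrable.2 hint).eLpNorm_ne_top
  simpa only [Real.norm_eq_abs] using hψ

omit [MeasurableSpace Ω] in
theorem hasSum_linearProcess_mul {ω : Ω} {x y : ℤ}
    (hx : Summable fun s : ℕ => ‖ψ s * ε (x - s) ω‖)
    (hy : Summable fun s : ℕ => ‖ψ s * ε (y - s) ω‖) :
    HasSum (fun p : ℕ × ℕ => ψ p.1 * ψ p.2 * (ε (x - p.1) ω * ε (y - p.2) ω))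
      (linearProcess ψ ε x ω * linearProcess ψ ε y ω) := by
  have h := hx.of_norm.hasSum.mul hy.of_norm.hasSum (summable_mul_of_summable_norm hx hy)
  simpa only [linearProcess, mul_mul_mul_comm] using h

variable [IsProbabilityMeasure μ]

theorem hasSum_integral_linearProcess_mul (hmeas : ∀ t, Measurable (ε t))
    (hident : ∀ s t : ℤ, IdentDistrib (ε s) (ε t) μ μ)
    (hfourth : ∀ t, Integrable (fun ω => ε t ω ^ 4) μ) (hψ : Summable fun s => |ψ s|)
    (x y : ℤ) :
    HasSum (fun p : ℕ × ℕ => ψ p.1 * ψ p.2 * ∫ ω, ε (x - p.1) ω * ε (y - p.2) ω ∂μ)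
      (∫ ω, linearProcess ψ ε x ω * linearProcess ψ ε y ω ∂μ) := by
  set F : ℕ × ℕ → Ω → ℝ := fun p ω => ψ p.1 * ψ p.2 * (ε (x - p.1) ω * ε (y - p.2) ω)
  have hprod (u v : ℤ) : Integrable (fun ω => ε u ω * ε v ω) μ :=
    (memLp_mul_of_integrable_pow_four hmeas hfourth u v).integrable one_le_two
  have hF_int (p : ℕ × ℕ) : Integrable (F p) μ := (hprod _ _).const_mul _
  have hF_sum : Summable fun p => ∫ ω, ‖F p ω‖ ∂μ := by
    refine Summable.of_nonneg_of_le (fun p => integral_nonneg fun ω => norm_nonneg _)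
      (fun p => ?_) ((hψ.mul_of_nonneg hψ (fun _ => abs_nonneg _) (fun _ => abs_nonneg _)).mul_right
        (1 + ∫ ω, ε 0 ω ^ 4 ∂μ))
    simp only [F, Real.norm_eq_abs, abs_mul (ψ p.1 * ψ p.2)]
    rw [integral_const_mul, ← abs_mul]
    exact mul_le_mul_of_nonneg_left
      (integral_abs_mul_le_one_add_integral_pow_four hmeas hident hfourth _ _) (by positivity)
  have hYY : ∀ᵐ ω ∂μ, ∑' p, F p ω = linearProcess ψ ε x ω * linearProcess ψ ε y ω := by
    filter_upwards [ae_summable_norm_linearProcess hmeas hident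
      (integrable_of_integrable_pow_four (hmeas 0).aestronglyMeasurable (hfourth 0)) hψ]
      with ω hω
    exact (hasSum_linearProcess_mul (hω x) (hω y)).tsum_eq
  rw [← integral_congr_ae hYY]
  simpa only [F, integral_const_mul] using hasSum_integral_of_summable_integral_norm hF_int hF_sum

theorem ae_hasSum_sum_sub_integral_linearProcess_mul (hmeas : ∀ t, Measurable (ε t))
    (hident : ∀ s t : ℤ, IdentDistrib (ε s) (ε t) μ μ)
    (hfourth : ∀ t, Integrable (fun ω => ε t ω ^ 4) μ) (hψ : Summable fun s => |ψ s|)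
    (n : ℕ) (a b : ℤ) :
    ∀ᵐ ω ∂μ, HasSum (fun p : ℕ × ℕ => ψ p.1 * ψ p.2 * ∑ t ∈ Finset.range n,
        (ε (t + (a - p.1)) ω * ε (t + (b - p.2)) ω
          - ∫ ω', ε (t + (a - p.1)) ω' * ε (t + (b - p.2)) ω' ∂μ))
      (∑ t ∈ Finset.range n, (linearProcess ψ ε (t + a) ω * linearProcess ψ ε (t + b) ω
          - ∫ ω', linearProcess ψ ε (t + a) ω' * linearProcess ψ ε (t + b) ω' ∂μ)) := by
  filter_upwards [ae_summable_norm_linearProcess hmeas hident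
    (integrable_of_integrable_pow_four (hmeas 0).aestronglyMeasurable (hfourth 0)) hψ]
    with ω hω
  have ht (t : ℕ) := (hasSum_linearProcess_mul (hω (t + a)) (hω (t + b))).sub
    (hasSum_integral_linearProcess_mul hmeas hident hfourth hψ (t + a) (t + b))
  simp only [Finset.mul_sum, mul_sub, ← add_sub_assoc]
  exact hasSum_sum fun t _ => ht t

theorem eLpNorm_sum_sub_integral_linearProcess_mul_le (hmeas : ∀ t, Measurable (ε t))
    (hindep : iIndepFun ε μ) (hident : ∀ s t : ℤ, IdentDistrib (ε s) (ε t) μ μ)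
    (hmean : ∀ t, ∫ ω, ε t ω ∂μ = 0) (hfourth : ∀ t, Integrable (fun ω => ε t ω ^ 4) μ)
    (hψ : Summable fun s => |ψ s|) (n : ℕ) (a b : ℤ) :
    eLpNorm (fun ω => ∑ t ∈ Finset.range n,
        (linearProcess ψ ε (t + a) ω * linearProcess ψ ε (t + b) ω
          - ∫ ω', linearProcess ψ ε (t + a) ω' * linearProcess ψ ε (t + b) ω' ∂μ)) 2 μ
      ≤ ENNReal.ofReal ((∑' s, |ψ s|) ^ 2 * √(n * ∫ ω, ε 0 ω ^ 4 ∂μ)) := by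
  have : Fact (1 ≤ (2 : ℝ≥0∞)) := ⟨one_le_two⟩
  set c := ENNReal.ofReal √(n * ∫ ω, ε 0 ω ^ 4 ∂μ)
  refine (eLpNorm_le_tsum_eLpNorm_of_ae_hasSum (fun p => by fun_prop)
    (ae_hasSum_sum_sub_integral_linearProcess_mul hmeas hident hfourth hψ n a b)).trans ?_
  calc _ ≤ ∑' p : ℕ × ℕ, ‖ψ p.1‖ₑ * ‖ψ p.2‖ₑ * c := by
        refine ENNReal.tsum_le_tsum fun p => ?_
        rw [← enorm_mul]
        exact (eLpNorm_const_smul (ψ p.1 * ψ p.2) _ 2 μ).trans_le (mul_le_mul_right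
          (eLpNorm_sum_sub_integral_lagProduct_le hmeas hindep hident hmean hfourth n _ _) _)
    _ = (∑' s, ‖ψ s‖ₑ) ^ 2 * c := by
        rw [ENNReal.tsum_mul_right, ENNReal.tsum_prod (f := fun i j => ‖ψ i‖ₑ * ‖ψ j‖ₑ)]
        simp only [ENNReal.tsum_mul_left, ENNReal.tsum_mul_right, sq]
    _ = _ := by
        rw [ENNReal.ofReal_mul (by positivity), ENNReal.ofReal_pow (by positivity),
          ENNReal.ofReal_tsum_of_nonneg (fun s => abs_nonneg _) hψ]
        simp only [Real.enorm_eq_ofReal_abs, c]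

end LinearProcess

end ProbabilityTheory

/-- Lemma 4: for a linear process with i.i.d. innovations with mean zero
and finite fourth moment and `Σ|ψ_s| < ∞`, the normalized centered partial sums of lagged
products are uniformly bounded in `L²`, over all `n ≥ 1` and lags `k, l ≥ 1`. -/
theorem lagged_products_L2_bound
    (μ : Measure Ω) [IsProbabilityMeasure μ]
    (ε : ℤ → Ω → ℝ) (ψ : ℕ → ℝ)
    (hmeas : ∀ t, Measurable (ε t))
    (hindep : iIndepFun ε μ)
    (hident : ∀ s t : ℤ, IdentDistrib (ε s) (ε t) μ μ)
    (hmean : ∀ t, ∫ ω, ε t ω ∂μ = 0)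
    (hfourth : ∀ t, Integrable (fun ω => (ε t ω) ^ 4) μ)
    (hψ : Summable fun s => |ψ s|)
    (Y : ℤ → Ω → ℝ) (hY : ∀ t ω, Y t ω = ∑' s : ℕ, ψ s * ε (t - (s : ℤ)) ω) :
    ∃ C : ℝ, ∀ n : ℕ, 1 ≤ n → ∀ k l : ℤ, 1 ≤ k → 1 ≤ l →
      ∫ ω, ((n : ℝ) ^ (-(1 / 2 : ℝ)) * ∑ t ∈ Finset.range n,
          (Y ((t : ℤ) + 1 - k) ω * Y ((t : ℤ) + 1 - l) ω -
            ∫ ω', Y ((t : ℤ) + 1 - k) ω' * Y ((t : ℤ) + 1 - l) ω' ∂μ)) ^ 2 ∂μ ≤ C := by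
  obtain rfl : Y = linearProcess ψ ε := funext fun t => funext (hY t)
  set m4 := ∫ ω, ε 0 ω ^ 4 ∂μ
  refine ⟨(∑' s, |ψ s|) ^ 4 * m4, fun n hn k l _ _ => ?_⟩
  simp only [add_sub_assoc]
  set S := fun ω => ∑ t ∈ Finset.range n,
    (linearProcess ψ ε (t + (1 - k)) ω * linearProcess ψ ε (t + (1 - l)) ω
      - ∫ ω', linearProcess ψ ε (t + (1 - k)) ω' * linearProcess ψ ε (t + (1 - l)) ω' ∂μ)
  have hS : AEStronglyMeasurable S μ := by
    have := measurable_linearProcess hmeas (ψ := ψ)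
    fun_prop
  have hnorm := eLpNorm_sum_sub_integral_linearProcess_mul_le hmeas hindep hident hmean hfourth
    hψ n (1 - k) (1 - l)
  have hn0 : (0 : ℝ) < n := by exact_mod_cast hn
  have hscale : ((n : ℝ) ^ (-(1 / 2 : ℝ))) ^ 2 = (n : ℝ)⁻¹ := by
    rw [← Real.rpow_natCast, ← Real.rpow_mul hn0.le]
    norm_num [Real.rpow_neg_one]
  calc ∫ ω, ((n : ℝ) ^ (-(1 / 2 : ℝ)) * S ω) ^ 2 ∂μ = (n : ℝ)⁻¹ * (eLpNorm S 2 μ).toReal ^ 2 := by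
        simp only [mul_pow, hscale, integral_const_mul, integral_sq_eq_toReal_eLpNorm_two_sq hS]
    _ ≤ (n : ℝ)⁻¹ * ((∑' s, |ψ s|) ^ 2 * √(n * m4)) ^ 2 := by
        gcongr
        exact ENNReal.toReal_le_of_le_ofReal (by positivity) hnorm
    _ = (∑' s, |ψ s|) ^ 4 * m4 := by
        rw [mul_pow, Real.sq_sqrt (by positivity)]
        field_simp

end
end

section
/- Let (ε_t)_{t∈ℤ} be i.i.d. with mean zero, finite variance, and finite fourth moment, and let Y_t = Σ_{s=0}^∞ ψ_s ε_{t−s} with ψ_s ≥ 0 and Σ_{s=0}^∞ ψ_s < ∞. Then the covariances of lagged products are summable in the time shift, uniformly over the lags: sup_{m∈ℤ} Σ_{s=0}^∞ | Cov( Y_0 Y_m , Y_s Y_{s+m} ) | < ∞; equivalently, for every t and all k, l ≥ 1, Σ_{s=0}^∞ sup_{k,l} |Cov( Y_{t−k} Y_{t−l} , Y_{t−s−k} Y_{t−s−l} )| < ∞. -/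
open MeasureTheory Filter ProbabilityTheory

noncomputable section

variable {Ω : Type*} [MeasurableSpace Ω]

/-!
Expanding both products, `Cov(Y_a Y_b, Y_c Y_d)` is the absolutely convergent sum over
`j, k, l, n` of `ψ_j ψ_k ψ_l ψ_n Cov(ε_{a-j} ε_{b-k}, ε_{c-l} ε_{d-n})`; finite fourth moments
justify exchanging sums and expectations. By independence and mean zero, a covariance of
innovation products vanishes unless `{c-l, d-n}` matches `{a-j, b-k}` as a pair, and it is
always at most `E ε⁴ + (E ε²)²`. For `(c, d) = (s, s + m)` and fixed `j, k, l, n`, at most two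
shifts `s` produce a pairing, so the sum over `s` is at most `2 (E ε⁴ + (E ε²)²) (∑ ψ)⁴`,
whatever `m` is.
-/

/-- `Cov(X₁ X₂, X₃ X₄)`, in the uncentred form `E[X₁X₂X₃X₄] - E[X₁X₂] E[X₃X₄]`. -/
def prodCov (μ : Measure Ω) (X₁ X₂ X₃ X₄ : Ω → ℝ) : ℝ :=
  (∫ ω, X₁ ω * X₂ ω * (X₃ ω * X₄ ω) ∂μ) - (∫ ω, X₁ ω * X₂ ω ∂μ) * ∫ ω, X₃ ω * X₄ ω ∂μ

section Pairing

variable {ι : Type*} [DecidableEq ι]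

def pairingCount (t₁ t₂ t₃ t₄ : ι) : ℝ :=
  (if t₁ = t₃ ∧ t₂ = t₄ then 1 else 0) + (if t₁ = t₄ ∧ t₂ = t₃ then 1 else 0)

lemma pairingCount_nonneg (t₁ t₂ t₃ t₄ : ι) : 0 ≤ pairingCount t₁ t₂ t₃ t₄ := by
  unfold pairingCount
  positivity

lemma pairingCount_le_two (t₁ t₂ t₃ t₄ : ι) : pairingCount t₁ t₂ t₃ t₄ ≤ 2 := by
  unfold pairingCount
  split_ifs <;> norm_num

lemma one_le_pairingCount {t₁ t₂ t₃ t₄ : ι} (h : t₁ = t₃ ∧ t₂ = t₄ ∨ t₁ = t₄ ∧ t₂ = t₃) :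
    1 ≤ pairingCount t₁ t₂ t₃ t₄ := by
  rcases h with h | h <;> simp only [pairingCount, if_pos h] <;> split_ifs <;> norm_num

end Pairing

lemma sum_range_pairingCount_add_le (a b c d : ℤ) (N : ℕ) :
    ∑ s ∈ Finset.range N, pairingCount a b ((s : ℤ) + c) ((s : ℤ) + d) ≤ 2 := by
  have at_most_one : ∀ (p : ℕ → Prop) [DecidablePred p], (∀ s t, p s → p t → s = t) →
      ∑ s ∈ Finset.range N, (if p s then (1 : ℝ) else 0) ≤ 1 := by
    intro p _ hp
    rw [Finset.sum_boole]
    exact_mod_cast Finset.card_le_one.2 fun s hs t ht =>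
      hp s t (Finset.mem_filter.1 hs).2 (Finset.mem_filter.1 ht).2
  simp only [pairingCount, Finset.sum_add_distrib]
  linarith [at_most_one (fun s : ℕ => a = s + c ∧ b = s + d) (by omega),
    at_most_one (fun s : ℕ => a = s + d ∧ b = s + c) (by omega)]

section Independence

variable {ι : Type*} {μ : Measure Ω} {ε : ι → Ω → ℝ}

lemma integral_mul_eq_zero_of_ne (hmeas : ∀ i, Measurable (ε i)) (hindep : iIndepFun ε μ)
    (hmean : ∀ i, ∫ ω, ε i ω ∂μ = 0) {i j : ι} (hij : i ≠ j) :
    ∫ ω, ε i ω * ε j ω ∂μ = 0 := by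
  rw [(hindep.indepFun hij).integral_fun_mul_eq_mul_integral (hmeas i).aestronglyMeasurable
    (hmeas j).aestronglyMeasurable, hmean i, zero_mul]

lemma integral_mul_mul_mul_mul_eq_zero_of_ne [DecidableEq ι] (hmeas : ∀ i, Measurable (ε i))
    (hindep : iIndepFun ε μ) (hmean : ∀ i, ∫ ω, ε i ω ∂μ = 0) {u a b c : ι}
    (ha : u ≠ a) (hb : u ≠ b) (hc : u ≠ c) :
    ∫ ω, ε u ω * (ε a ω * ε b ω * ε c ω) ∂μ = 0 := by
  have hind : IndepFun (ε u) (fun ω => ε a ω * ε b ω * ε c ω) μ := by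
    have hφ : Measurable fun x : ({u} : Finset ι) → ℝ => x ⟨u, Finset.mem_singleton_self u⟩ :=
      measurable_pi_apply _
    have hψ : Measurable fun x : ({a, b, c} : Finset ι) → ℝ =>
        x ⟨a, by simp⟩ * x ⟨b, by simp⟩ * x ⟨c, by simp⟩ := by fun_prop
    exact (hindep.indepFun_finset {u} {a, b, c} (by simp [ha, hb, hc]) hmeas).comp hφ hψ
  rw [hind.integral_fun_mul_eq_mul_integral (hmeas u).aestronglyMeasurable (by fun_prop), hmean u,
    zero_mul]

lemma prodCov_eq_zero_of_not_paired [DecidableEq ι] (hmeas : ∀ i, Measurable (ε i))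
    (hindep : iIndepFun ε μ) (hmean : ∀ i, ∫ ω, ε i ω ∂μ = 0) {t₁ t₂ t₃ t₄ : ι}
    (h₁ : ¬(t₁ = t₃ ∧ t₂ = t₄)) (h₂ : ¬(t₁ = t₄ ∧ t₂ = t₃)) :
    prodCov μ (ε t₁) (ε t₂) (ε t₃) (ε t₄) = 0 := by
  unfold prodCov
  by_cases hsq : t₁ = t₂ ∧ t₃ = t₄
  · obtain ⟨rfl, rfl⟩ := hsq
    have hind : IndepFun (fun ω => ε t₁ ω * ε t₁ ω) (fun ω => ε t₃ ω * ε t₃ ω) μ :=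
      (hindep.indepFun fun h => h₁ ⟨h, h⟩).comp (φ := fun x => x * x) (ψ := fun x => x * x)
        (by fun_prop) (by fun_prop)
    rw [hind.integral_fun_mul_eq_mul_integral (by fun_prop) (by fun_prop), sub_self]
  have hpair : (∫ ω, ε t₁ ω * ε t₂ ω ∂μ) * ∫ ω, ε t₃ ω * ε t₄ ω ∂μ = 0 := by
    rcases not_and_or.1 hsq with h | h
    · rw [integral_mul_eq_zero_of_ne hmeas hindep hmean h, zero_mul]
    · rw [integral_mul_eq_zero_of_ne hmeas hindep hmean h, mul_zero]
  -- Without a pairing, some innovation occurs exactly once and factors out with mean zero.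
  have hlonely : (t₁ ≠ t₂ ∧ t₁ ≠ t₃ ∧ t₁ ≠ t₄) ∨ (t₂ ≠ t₁ ∧ t₂ ≠ t₃ ∧ t₂ ≠ t₄) ∨
      (t₃ ≠ t₁ ∧ t₃ ≠ t₂ ∧ t₃ ≠ t₄) ∨ (t₄ ≠ t₁ ∧ t₄ ≠ t₂ ∧ t₄ ≠ t₃) := by
    grind
  rw [hpair, sub_zero]
  rcases hlonely with ⟨ha, hb, hc⟩ | ⟨ha, hb, hc⟩ | ⟨ha, hb, hc⟩ | ⟨ha, hb, hc⟩
  all_goals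
    rw [← integral_mul_mul_mul_mul_eq_zero_of_ne hmeas hindep hmean ha hb hc]
    congr 1
    ext ω
    ring

end Independence

lemma abs_mul_le_add_sq_div_two (a b : ℝ) : |a * b| ≤ (a ^ 2 + b ^ 2) / 2 := by
  rw [abs_le]
  constructor <;> nlinarith [sq_nonneg (a - b), sq_nonneg (a + b)]

lemma abs_mul_mul_mul_le_add_pow_four_div_four (a b c d : ℝ) :
    |a * b * (c * d)| ≤ (a ^ 4 + b ^ 4 + (c ^ 4 + d ^ 4)) / 4 := by
  rw [abs_le]
  constructor <;>
  nlinarith [sq_nonneg (a * b - c * d), sq_nonneg (a * b + c * d), sq_nonneg (a ^ 2 - b ^ 2),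
    sq_nonneg (c ^ 2 - d ^ 2), sq_nonneg (a ^ 2 + b ^ 2), sq_nonneg (c ^ 2 + d ^ 2)]

section Moments

variable {μ : Measure Ω}

lemma memLp_two_of_integrable_pow_four [IsFiniteMeasure μ] {f : Ω → ℝ}
    (hf : AEStronglyMeasurable f μ) (h4 : Integrable (fun ω => f ω ^ 4) μ) : MemLp f 2 μ := by
  rw [memLp_two_iff_integrable_sq hf]
  simpa using integrable_norm_pow_of_le hf (by norm_num : 2 ≤ 4)
    (by simpa [Even.pow_abs ⟨2, rfl⟩] using h4)

variable {ι : Type*} {ε : ι → Ω → ℝ}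

lemma integral_abs_mul_le [IsFiniteMeasure μ] (hmeas : ∀ i, Measurable (ε i))
    (h4 : ∀ i, Integrable (fun ω => ε i ω ^ 4) μ)
    (hident : ∀ i j, IdentDistrib (ε i) (ε j) μ μ) (a b i : ι) :
    ∫ ω, |ε a ω * ε b ω| ∂μ ≤ ∫ ω, ε i ω ^ 2 ∂μ := by
  have hsq : ∀ j, Integrable (fun ω => ε j ω ^ 2) μ := fun j =>
    (memLp_two_of_integrable_pow_four (hmeas j).aestronglyMeasurable (h4 j)).integrable_sq
  have hsq_eq : ∀ j, ∫ ω, ε j ω ^ 2 ∂μ = ∫ ω, ε i ω ^ 2 ∂μ := fun j =>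
    ((hident j i).comp (measurable_id.pow_const 2)).integral_eq
  calc ∫ ω, |ε a ω * ε b ω| ∂μ ≤ ∫ ω, (ε a ω ^ 2 + ε b ω ^ 2) / 2 ∂μ :=
        integral_mono_of_nonneg (ae_of_all _ fun _ => abs_nonneg _)
          (((hsq a).fun_add (hsq b)).div_const 2)
          (ae_of_all _ fun _ => abs_mul_le_add_sq_div_two _ _)
    _ = ∫ ω, ε i ω ^ 2 ∂μ := by
        rw [integral_div, integral_add (hsq a) (hsq b), hsq_eq a, hsq_eq b]
        ring

lemma integrable_mul_mul_mul (hmeas : ∀ i, Measurable (ε i))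
    (h4 : ∀ i, Integrable (fun ω => ε i ω ^ 4) μ) (a b c d : ι) :
    Integrable (fun ω => ε a ω * ε b ω * (ε c ω * ε d ω)) μ :=
  ((((h4 a).fun_add (h4 b)).fun_add ((h4 c).fun_add (h4 d))).div_const 4).mono' (by fun_prop)
    (ae_of_all _ fun _ => abs_mul_mul_mul_le_add_pow_four_div_four _ _ _ _)

lemma integral_abs_mul_mul_mul_le (h4 : ∀ i, Integrable (fun ω => ε i ω ^ 4) μ)
    (hident : ∀ i j, IdentDistrib (ε i) (ε j) μ μ) (a b c d i : ι) :
    ∫ ω, |ε a ω * ε b ω * (ε c ω * ε d ω)| ∂μ ≤ ∫ ω, ε i ω ^ 4 ∂μ := by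
  have h4_eq : ∀ j, ∫ ω, ε j ω ^ 4 ∂μ = ∫ ω, ε i ω ^ 4 ∂μ := fun j =>
    ((hident j i).comp (measurable_id.pow_const 4)).integral_eq
  calc ∫ ω, |ε a ω * ε b ω * (ε c ω * ε d ω)| ∂μ
      ≤ ∫ ω, (ε a ω ^ 4 + ε b ω ^ 4 + (ε c ω ^ 4 + ε d ω ^ 4)) / 4 ∂μ :=
        integral_mono_of_nonneg (ae_of_all _ fun _ => abs_nonneg _)
          ((((h4 a).fun_add (h4 b)).fun_add ((h4 c).fun_add (h4 d))).div_const 4)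
          (ae_of_all _ fun _ => abs_mul_mul_mul_le_add_pow_four_div_four _ _ _ _)
    _ = ∫ ω, ε i ω ^ 4 ∂μ := by
        rw [integral_div, integral_add ((h4 a).fun_add (h4 b)) ((h4 c).fun_add (h4 d)),
          integral_add (h4 a) (h4 b), integral_add (h4 c) (h4 d), h4_eq a, h4_eq b, h4_eq c,
          h4_eq d]
        ring

lemma abs_prodCov_le [IsFiniteMeasure μ] [DecidableEq ι] (hmeas : ∀ i, Measurable (ε i))
    (hindep : iIndepFun ε μ) (hident : ∀ i j, IdentDistrib (ε i) (ε j) μ μ)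
    (hmean : ∀ i, ∫ ω, ε i ω ∂μ = 0)
    (h4 : ∀ i, Integrable (fun ω => ε i ω ^ 4) μ) (t₁ t₂ t₃ t₄ i : ι) :
    |prodCov μ (ε t₁) (ε t₂) (ε t₃) (ε t₄)|
      ≤ (∫ ω, ε i ω ^ 4 ∂μ + (∫ ω, ε i ω ^ 2 ∂μ) ^ 2) * pairingCount t₁ t₂ t₃ t₄ := by
  have habs : ∀ f : Ω → ℝ, |∫ ω, f ω ∂μ| ≤ ∫ ω, |f ω| ∂μ := fun f => abs_integral_le_integral_abs
  have hM : 0 ≤ ∫ ω, ε i ω ^ 4 ∂μ + (∫ ω, ε i ω ^ 2 ∂μ) ^ 2 := by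
    have : 0 ≤ ∫ ω, ε i ω ^ 4 ∂μ := integral_nonneg fun _ => by positivity
    positivity
  by_cases hpaired : t₁ = t₃ ∧ t₂ = t₄ ∨ t₁ = t₄ ∧ t₂ = t₃
  · have h12 := (habs _).trans (integral_abs_mul_le hmeas h4 hident t₁ t₂ i)
    have h34 := (habs _).trans (integral_abs_mul_le hmeas h4 hident t₃ t₄ i)
    calc |prodCov μ (ε t₁) (ε t₂) (ε t₃) (ε t₄)|
        ≤ ∫ ω, ε i ω ^ 4 ∂μ + (∫ ω, ε i ω ^ 2 ∂μ) ^ 2 := by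
          unfold prodCov
          refine (abs_sub _ _).trans (add_le_add
            ((habs _).trans (integral_abs_mul_mul_mul_le h4 hident _ _ _ _ i)) ?_)
          rw [abs_mul, sq]
          exact mul_le_mul h12 h34 (abs_nonneg _) ((abs_nonneg _).trans h12)
      _ ≤ _ := le_mul_of_one_le_right hM (one_le_pairingCount hpaired)
  · rw [not_or] at hpaired
    rw [prodCov_eq_zero_of_not_paired hmeas hindep hmean hpaired.1 hpaired.2, abs_zero]
    exact mul_nonneg hM (pairingCount_nonneg _ _ _ _)

end Moments

section Series

variable {μ : Measure Ω}

lemma ae_summable_norm_of_summable_integral_norm {ι E : Type*} [Countable ι]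
    [NormedAddCommGroup E] {F : ι → Ω → E} (hF : ∀ i, Integrable (F i) μ)
    (hsum : Summable fun i => ∫ ω, ‖F i ω‖ ∂μ) :
    ∀ᵐ ω ∂μ, Summable fun i => ‖F i ω‖ := by
  refine summable_norm_of_tsum_eLpNorm_ne_top le_rfl (fun i => (hF i).1) ?_
  simp_rw [eLpNorm_one_eq_lintegral_enorm, ← ofReal_integral_norm_eq_lintegral_enorm (hF _)]
  rw [← ENNReal.ofReal_tsum_of_nonneg (fun i => integral_nonneg fun _ => norm_nonneg _) hsum]
  exact ENNReal.ofReal_ne_top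

lemma hasSum_prodCov {ι κ : Type*} [Countable ι] [Countable κ] {X₁ X₂ X₃ X₄ : Ω → ℝ}
    {F : ι → Ω → ℝ} {G : κ → Ω → ℝ}
    (hF : ∀ᵐ ω ∂μ, HasSum (F · ω) (X₁ ω * X₂ ω)) (hG : ∀ᵐ ω ∂μ, HasSum (G · ω) (X₃ ω * X₄ ω))
    (hF_int : ∀ i, Integrable (F i) μ) (hG_int : ∀ j, Integrable (G j) μ)
    (hFG_int : ∀ p : ι × κ, Integrable (fun ω => F p.1 ω * G p.2 ω) μ)
    (hF_sum : Summable fun i => ∫ ω, ‖F i ω‖ ∂μ) (hG_sum : Summable fun j => ∫ ω, ‖G j ω‖ ∂μ)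
    (hFG_sum : Summable fun p : ι × κ => ∫ ω, ‖F p.1 ω * G p.2 ω‖ ∂μ) :
    HasSum (fun p : ι × κ => (∫ ω, F p.1 ω * G p.2 ω ∂μ) - (∫ ω, F p.1 ω ∂μ) * ∫ ω, G p.2 ω ∂μ)
      (prodCov μ X₁ X₂ X₃ X₄) := by
  have hF_abs := ae_summable_norm_of_summable_integral_norm hF_int hF_sum
  have hG_abs := ae_summable_norm_of_summable_integral_norm hG_int hG_sum
  have h12 : HasSum (fun i => ∫ ω, F i ω ∂μ) (∫ ω, X₁ ω * X₂ ω ∂μ) := by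
    have h := hasSum_integral_of_summable_integral_norm hF_int hF_sum
    rwa [integral_congr_ae (by filter_upwards [hF] with ω h using h.tsum_eq)] at h
  have h34 : HasSum (fun j => ∫ ω, G j ω ∂μ) (∫ ω, X₃ ω * X₄ ω ∂μ) := by
    have h := hasSum_integral_of_summable_integral_norm hG_int hG_sum
    rwa [integral_congr_ae (by filter_upwards [hG] with ω h using h.tsum_eq)] at h
  have h1234 : HasSum (fun p : ι × κ => ∫ ω, F p.1 ω * G p.2 ω ∂μ)
      (∫ ω, X₁ ω * X₂ ω * (X₃ ω * X₄ ω) ∂μ) := by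
    have h := hasSum_integral_of_summable_integral_norm hFG_int hFG_sum
    rwa [integral_congr_ae (g := fun ω => X₁ ω * X₂ ω * (X₃ ω * X₄ ω)) ?_] at h
    filter_upwards [hF, hG, hF_abs, hG_abs] with ω h₁₂ h₃₄ hF_ω hG_ω
    rw [← h₁₂.tsum_eq, ← h₃₄.tsum_eq, tsum_mul_tsum_of_summable_norm hF_ω hG_ω]
  have hF_int_norm : Summable fun i => ‖∫ ω, F i ω ∂μ‖ :=
    hF_sum.of_nonneg_of_le (fun _ => norm_nonneg _) fun _ => norm_integral_le_integral_norm _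
  have hG_int_norm : Summable fun j => ‖∫ ω, G j ω ∂μ‖ :=
    hG_sum.of_nonneg_of_le (fun _ => norm_nonneg _) fun _ => norm_integral_le_integral_norm _
  exact h1234.sub (h12.mul h34 (summable_mul_of_summable_norm hF_int_norm hG_int_norm))

end Series

lemma hasSum_mul_tsum_lagged {ψ : ℕ → ℝ} {e : ℤ → ℝ} {a b : ℤ}
    (ha : Summable fun s : ℕ => ‖ψ s * e (a - s)‖) (hb : Summable fun s : ℕ => ‖ψ s * e (b - s)‖) :
    HasSum (fun p : ℕ × ℕ => ψ p.1 * ψ p.2 * (e (a - p.1) * e (b - p.2)))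
      ((∑' s : ℕ, ψ s * e (a - s)) * ∑' s : ℕ, ψ s * e (b - s)) := by
  rw [tsum_mul_tsum_of_summable_norm ha hb]
  simpa only [mul_mul_mul_comm (ψ _)] using (summable_mul_of_summable_norm ha hb).hasSum

def quadWeight (ψ : ℕ → ℝ) (q : (ℕ × ℕ) × (ℕ × ℕ)) : ℝ :=
  ψ q.1.1 * ψ q.1.2 * (ψ q.2.1 * ψ q.2.2)

section Weights

variable {ψ : ℕ → ℝ}

lemma quadWeight_nonneg (hψpos : ∀ s, 0 ≤ ψ s) (q : (ℕ × ℕ) × (ℕ × ℕ)) : 0 ≤ quadWeight ψ q :=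
  mul_nonneg (mul_nonneg (hψpos _) (hψpos _)) (mul_nonneg (hψpos _) (hψpos _))

lemma summable_quadWeight (hψpos : ∀ s, 0 ≤ ψ s) (hψ : Summable ψ) : Summable (quadWeight ψ) := by
  have hψψ : Summable fun p : ℕ × ℕ => ψ p.1 * ψ p.2 := hψ.mul_of_nonneg hψ hψpos hψpos
  exact hψψ.mul_of_nonneg hψψ (fun _ => mul_nonneg (hψpos _) (hψpos _))
    (fun _ => mul_nonneg (hψpos _) (hψpos _))

lemma summable_quadWeight_mul_pairingCount (hψpos : ∀ s, 0 ≤ ψ s) (hψ : Summable ψ)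
    (t₁ t₂ t₃ t₄ : (ℕ × ℕ) × (ℕ × ℕ) → ℤ) :
    Summable fun q => quadWeight ψ q * pairingCount (t₁ q) (t₂ q) (t₃ q) (t₄ q) :=
  ((summable_quadWeight hψpos hψ).mul_right 2).of_nonneg_of_le
    (fun q => mul_nonneg (quadWeight_nonneg hψpos q) (pairingCount_nonneg _ _ _ _))
    fun q => mul_le_mul_of_nonneg_left (pairingCount_le_two _ _ _ _) (quadWeight_nonneg hψpos q)

end Weights

def expansionTerm {T : Type*} (ψ : ℕ → ℝ) (ε : ℤ → T → ℝ) (a b : ℤ) (p : ℕ × ℕ) (ω : T) : ℝ :=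
  ψ p.1 * ψ p.2 * (ε (a - p.1) ω * ε (b - p.2) ω)

lemma expansionTerm_mul_expansionTerm {T : Type*} (ψ : ℕ → ℝ) (ε : ℤ → T → ℝ) (a b c d : ℤ)
    (q : (ℕ × ℕ) × (ℕ × ℕ)) (ω : T) :
    expansionTerm ψ ε a b q.1 ω * expansionTerm ψ ε c d q.2 ω = quadWeight ψ q *
      (ε (a - q.1.1) ω * ε (b - q.1.2) ω * (ε (c - q.2.1) ω * ε (d - q.2.2) ω)) :=
  mul_mul_mul_comm _ _ _ _

section LinearProcess

variable {μ : Measure Ω} {ε : ℤ → Ω → ℝ} {ψ : ℕ → ℝ} {Y : ℤ → Ω → ℝ}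

lemma integral_norm_const_mul (c : ℝ) (X : Ω → ℝ) :
    ∫ ω, ‖c * X ω‖ ∂μ = |c| * ∫ ω, |X ω| ∂μ := by
  simp_rw [norm_mul, integral_const_mul, Real.norm_eq_abs]

lemma ae_summable_norm_linearProcess (hint : ∀ t, Integrable (ε t) μ)
    (hident : ∀ s t, IdentDistrib (ε s) (ε t) μ μ) (hψ : Summable ψ) :
    ∀ᵐ ω ∂μ, ∀ t : ℤ, Summable fun s : ℕ => ‖ψ s * ε (t - s) ω‖ := by
  refine ae_all_iff.2 fun t => ae_summable_norm_of_summable_integral_norm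
    (fun s => (hint _).const_mul _) ?_
  have h : ∀ s : ℕ, ∫ ω, ‖ψ s * ε (t - s) ω‖ ∂μ = |ψ s| * ∫ ω, |ε 0 ω| ∂μ := fun s => by
    rw [integral_norm_const_mul]
    congr 1
    exact ((hident _ 0).comp measurable_abs).integral_eq
  simpa only [h] using hψ.abs.mul_right _

lemma ae_hasSum_expansionTerm [IsFiniteMeasure μ] (hmeas : ∀ t, Measurable (ε t))
    (hident : ∀ s t, IdentDistrib (ε s) (ε t) μ μ) (h4 : ∀ t, Integrable (fun ω => ε t ω ^ 4) μ)
    (hψ : Summable ψ) (hY : ∀ t ω, Y t ω = ∑' s : ℕ, ψ s * ε (t - s) ω) (a b : ℤ) :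
    ∀ᵐ ω ∂μ, HasSum (expansionTerm ψ ε a b · ω) (Y a ω * Y b ω) := by
  have hint : ∀ t, Integrable (ε t) μ := fun t =>
    (memLp_two_of_integrable_pow_four (hmeas t).aestronglyMeasurable (h4 t)).integrable one_le_two
  filter_upwards [ae_summable_norm_linearProcess hint hident hψ] with ω hω
  rw [hY a ω, hY b ω]
  exact hasSum_mul_tsum_lagged (e := fun t => ε t ω) (hω a) (hω b)

lemma integrable_expansionTerm [IsFiniteMeasure μ] (hmeas : ∀ t, Measurable (ε t))
    (h4 : ∀ t, Integrable (fun ω => ε t ω ^ 4) μ) (a b : ℤ) (p : ℕ × ℕ) :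
    Integrable (expansionTerm ψ ε a b p) μ :=
  ((memLp_two_of_integrable_pow_four (hmeas _).aestronglyMeasurable (h4 _)).integrable_mul
    (memLp_two_of_integrable_pow_four (hmeas _).aestronglyMeasurable (h4 _))).const_mul _

lemma summable_integral_norm_expansionTerm [IsFiniteMeasure μ] (hmeas : ∀ t, Measurable (ε t))
    (hident : ∀ s t, IdentDistrib (ε s) (ε t) μ μ) (h4 : ∀ t, Integrable (fun ω => ε t ω ^ 4) μ)
    (hψpos : ∀ s, 0 ≤ ψ s) (hψ : Summable ψ) (a b : ℤ) :
    Summable fun p => ∫ ω, ‖expansionTerm ψ ε a b p ω‖ ∂μ := by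
  have hψψ : ∀ p : ℕ × ℕ, 0 ≤ ψ p.1 * ψ p.2 := fun _ => mul_nonneg (hψpos _) (hψpos _)
  refine ((hψ.mul_of_nonneg hψ hψpos hψpos).mul_right (∫ ω, ε 0 ω ^ 2 ∂μ)).of_nonneg_of_le
    (fun _ => integral_nonneg fun _ => norm_nonneg _) fun p => ?_
  simp only [expansionTerm]
  rw [integral_norm_const_mul, abs_of_nonneg (hψψ p)]
  exact mul_le_mul_of_nonneg_left (integral_abs_mul_le hmeas h4 hident _ _ 0) (hψψ p)

lemma integrable_expansionTerm_mul (hmeas : ∀ t, Measurable (ε t))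
    (h4 : ∀ t, Integrable (fun ω => ε t ω ^ 4) μ) (a b c d : ℤ) (q : (ℕ × ℕ) × (ℕ × ℕ)) :
    Integrable (fun ω => expansionTerm ψ ε a b q.1 ω * expansionTerm ψ ε c d q.2 ω) μ := by
  simp only [expansionTerm_mul_expansionTerm]
  exact (integrable_mul_mul_mul hmeas h4 _ _ _ _).const_mul _

lemma summable_integral_norm_expansionTerm_mul (hident : ∀ s t, IdentDistrib (ε s) (ε t) μ μ)
    (h4 : ∀ t, Integrable (fun ω => ε t ω ^ 4) μ) (hψpos : ∀ s, 0 ≤ ψ s) (hψ : Summable ψ)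
    (a b c d : ℤ) :
    Summable fun q : (ℕ × ℕ) × (ℕ × ℕ) =>
      ∫ ω, ‖expansionTerm ψ ε a b q.1 ω * expansionTerm ψ ε c d q.2 ω‖ ∂μ := by
  refine ((summable_quadWeight hψpos hψ).mul_right (∫ ω, ε 0 ω ^ 4 ∂μ)).of_nonneg_of_le
    (fun _ => integral_nonneg fun _ => norm_nonneg _) fun q => ?_
  simp only [expansionTerm_mul_expansionTerm]
  rw [integral_norm_const_mul, abs_of_nonneg (quadWeight_nonneg hψpos q)]
  exact mul_le_mul_of_nonneg_left (integral_abs_mul_mul_mul_le h4 hident _ _ _ _ 0)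
    (quadWeight_nonneg hψpos q)

lemma hasSum_prodCov_linearProcess [IsFiniteMeasure μ] (hmeas : ∀ t, Measurable (ε t))
    (hident : ∀ s t, IdentDistrib (ε s) (ε t) μ μ) (h4 : ∀ t, Integrable (fun ω => ε t ω ^ 4) μ)
    (hψpos : ∀ s, 0 ≤ ψ s) (hψ : Summable ψ)
    (hY : ∀ t ω, Y t ω = ∑' s : ℕ, ψ s * ε (t - s) ω) (a b c d : ℤ) :
    HasSum (fun q => quadWeight ψ q *
        prodCov μ (ε (a - q.1.1)) (ε (b - q.1.2)) (ε (c - q.2.1)) (ε (d - q.2.2)))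
      (prodCov μ (Y a) (Y b) (Y c) (Y d)) := by
  convert hasSum_prodCov (ae_hasSum_expansionTerm hmeas hident h4 hψ hY a b)
    (ae_hasSum_expansionTerm hmeas hident h4 hψ hY c d) (integrable_expansionTerm hmeas h4 a b)
    (integrable_expansionTerm hmeas h4 c d) (integrable_expansionTerm_mul hmeas h4 a b c d)
    (summable_integral_norm_expansionTerm hmeas hident h4 hψpos hψ a b)
    (summable_integral_norm_expansionTerm hmeas hident h4 hψpos hψ c d)
    (summable_integral_norm_expansionTerm_mul hident h4 hψpos hψ a b c d) using 1
  ext q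
  simp only [expansionTerm_mul_expansionTerm]
  simp only [expansionTerm, prodCov, integral_const_mul, quadWeight]
  ring

lemma abs_prodCov_linearProcess_le [IsFiniteMeasure μ] (hmeas : ∀ t, Measurable (ε t))
    (hindep : iIndepFun ε μ) (hident : ∀ s t, IdentDistrib (ε s) (ε t) μ μ)
    (hmean : ∀ t, ∫ ω, ε t ω ∂μ = 0) (h4 : ∀ t, Integrable (fun ω => ε t ω ^ 4) μ)
    (hψpos : ∀ s, 0 ≤ ψ s) (hψ : Summable ψ)
    (hY : ∀ t ω, Y t ω = ∑' s : ℕ, ψ s * ε (t - s) ω) (a b c d : ℤ) :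
    |prodCov μ (Y a) (Y b) (Y c) (Y d)| ≤ (∫ ω, ε 0 ω ^ 4 ∂μ + (∫ ω, ε 0 ω ^ 2 ∂μ) ^ 2) *
      ∑' q, quadWeight ψ q * pairingCount (a - q.1.1) (b - q.1.2) (c - q.2.1) (d - q.2.2) := by
  rw [← tsum_mul_left]
  refine (hasSum_prodCov_linearProcess hmeas hident h4 hψpos hψ hY a b c d).norm_le_of_bounded
    ((summable_quadWeight_mul_pairingCount hψpos hψ _ _ _ _).mul_left _).hasSum fun q => ?_
  rw [Real.norm_eq_abs, abs_mul, abs_of_nonneg (quadWeight_nonneg hψpos q), mul_left_comm]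
  exact mul_le_mul_of_nonneg_left (abs_prodCov_le hmeas hindep hident hmean h4 _ _ _ _ 0)
    (quadWeight_nonneg hψpos q)

end LinearProcess

lemma sum_range_tsum_quadWeight_mul_pairingCount_le {ψ : ℕ → ℝ} (hψpos : ∀ s, 0 ≤ ψ s)
    (hψ : Summable ψ) (a b d : ℤ) (N : ℕ) :
    ∑ s ∈ Finset.range N, ∑' q, quadWeight ψ q *
        pairingCount (a - q.1.1) (b - q.1.2) ((s : ℤ) - q.2.1) ((s : ℤ) + d - q.2.2)
      ≤ 2 * ∑' q, quadWeight ψ q := by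
  have hcount : ∀ q : (ℕ × ℕ) × (ℕ × ℕ), ∑ s ∈ Finset.range N,
      pairingCount (a - q.1.1) (b - q.1.2) ((s : ℤ) - q.2.1) ((s : ℤ) + d - q.2.2) ≤ 2 :=
    fun q => by
      simpa only [sub_eq_add_neg, add_assoc] using
        sum_range_pairingCount_add_le (a - q.1.1) (b - q.1.2) (-q.2.1) (d - q.2.2) N
  rw [← Summable.tsum_finsetSum fun s _ => summable_quadWeight_mul_pairingCount hψpos hψ _ _ _ _,
    ← tsum_mul_left]
  refine Summable.tsum_le_tsum (fun q => ?_)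
    (summable_sum fun s _ => summable_quadWeight_mul_pairingCount hψpos hψ _ _ _ _)
    ((summable_quadWeight hψpos hψ).mul_left 2)
  rw [← Finset.mul_sum, mul_comm 2]
  exact mul_le_mul_of_nonneg_left (hcount q) (quadWeight_nonneg hψpos q)

/-- key estimate in Lemma 4: for a linear process with nonnegative
absolutely summable coefficients and i.i.d. mean-zero innovations with finite fourth
moment, the covariances of lagged products are summable in the time shift, uniformly over
the lag difference `m`. -/
theorem lagged_products_cov_summable
    (μ : Measure Ω) [IsProbabilityMeasure μ]
    (ε : ℤ → Ω → ℝ) (ψ : ℕ → ℝ)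
    (hmeas : ∀ t, Measurable (ε t))
    (hindep : iIndepFun ε μ)
    (hident : ∀ s t : ℤ, IdentDistrib (ε s) (ε t) μ μ)
    (hmean : ∀ t, ∫ ω, ε t ω ∂μ = 0)
    (hfourth : ∀ t, Integrable (fun ω => (ε t ω) ^ 4) μ)
    (hψpos : ∀ s, 0 ≤ ψ s) (hψ : Summable ψ)
    (Y : ℤ → Ω → ℝ) (hY : ∀ t ω, Y t ω = ∑' s : ℕ, ψ s * ε (t - (s : ℤ)) ω) :
    ∃ C : ℝ, ∀ m : ℤ,
      Summable (fun s : ℕ =>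
        |(∫ ω, Y 0 ω * Y m ω * (Y (s : ℤ) ω * Y ((s : ℤ) + m) ω) ∂μ) -
          (∫ ω, Y 0 ω * Y m ω ∂μ) * ∫ ω, Y (s : ℤ) ω * Y ((s : ℤ) + m) ω ∂μ|) ∧
      ∑' s : ℕ,
        |(∫ ω, Y 0 ω * Y m ω * (Y (s : ℤ) ω * Y ((s : ℤ) + m) ω) ∂μ) -
          (∫ ω, Y 0 ω * Y m ω ∂μ) * ∫ ω, Y (s : ℤ) ω * Y ((s : ℤ) + m) ω ∂μ| ≤ C := by
  set M := ∫ ω, ε 0 ω ^ 4 ∂μ + (∫ ω, ε 0 ω ^ 2 ∂μ) ^ 2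
  have hM : 0 ≤ M := add_nonneg (integral_nonneg fun _ => by positivity) (sq_nonneg _)
  refine ⟨M * (2 * ∑' q, quadWeight ψ q), fun m => ?_⟩
  have hpartial : ∀ N, ∑ s ∈ Finset.range N, |prodCov μ (Y 0) (Y m) (Y s) (Y (s + m))|
      ≤ M * (2 * ∑' q, quadWeight ψ q) := fun N =>
    calc ∑ s ∈ Finset.range N, |prodCov μ (Y 0) (Y m) (Y s) (Y (s + m))|
        ≤ ∑ s ∈ Finset.range N, M * ∑' q, quadWeight ψ q *
            pairingCount ((0 : ℤ) - q.1.1) (m - q.1.2) ((s : ℤ) - q.2.1) ((s : ℤ) + m - q.2.2) :=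
          Finset.sum_le_sum fun s _ => abs_prodCov_linearProcess_le hmeas hindep hident hmean
            hfourth hψpos hψ hY 0 m s (s + m)
      _ ≤ M * (2 * ∑' q, quadWeight ψ q) := by
          rw [← Finset.mul_sum]
          exact mul_le_mul_of_nonneg_left
            (sum_range_tsum_quadWeight_mul_pairingCount_le hψpos hψ 0 m m N) hM
  exact ⟨summable_of_sum_range_le (fun _ => abs_nonneg _) hpartial,
    Real.tsum_le_of_sum_range_le (fun _ => abs_nonneg _) hpartial⟩
end
end
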